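/- Consider the single-strain (isolation) dynamics Y(c) with growth rate μ > 0, kill rate k ≥ 0, and inoculum 0 ≤ X_0 ≤ K. Then Y(c) → 0 as c → ∞ if and only if X_0 < X_e, or (k t_k − log D)/μ > min{ t_g , (1/μ) · log(K / X_e) }. -/
import Mathlib


open scoped Classical

/-- Extinction indicator: `Ie Xe x = 1` if `x ≥ Xe`, else `0`. -/
noncomputable def Ie (Xe x : ℝ) : ℝ := if Xe ≤ x then 1 else 0

/-- Single-strain (isolation) dynamics `Y(c)`: index `0` is the inoculum `X_0 = Y(1)`,
so `isoY μ k tg tk D Xe K Xinit c` is `Y(c+1)` of the paper. -/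
noncomputable def isoY (μ k tg tk D Xe K Xinit : ℝ) : ℕ → ℝ
  | 0 => Xinit
  | c + 1 =>
      D * isoY μ k tg tk D Xe K Xinit c *
        Real.exp (μ *
            (if Xe ≤ isoY μ k tg tk D Xe K Xinit c then
              min tg ((1 / μ) * Real.log (K / isoY μ k tg tk D Xe K Xinit c))
            else tg) *
            Ie Xe (isoY μ k tg tk D Xe K Xinit c) -
          k * tk)

/-- Proposition 1, part 1 of the paper: a strain goes extinct in
isolation iff its inoculum is below the extinction limit or its equilibrium time
`(k t_k − log D)/μ` exceeds `min {t_g, (1/μ) log(K/X_e)}`. -/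
theorem stmt6 (μ k tg tk D Xe K Xinit : ℝ) (hμ : 0 < μ) (hk : 0 ≤ k)
    (htg : 0 < tg) (htk : 0 < tk) (hD0 : 0 < D) (hD1 : D < 1)
    (hXe : 0 < Xe) (hXeK : Xe < K) (hXinit : 0 ≤ Xinit) (hXinitK : Xinit ≤ K) :
    Filter.Tendsto (isoY μ k tg tk D Xe K Xinit) Filter.atTop (nhds 0) ↔
      Xinit < Xe ∨
        min tg ((1 / μ) * Real.log (K / Xe)) < (k * tk - Real.log D) / μ := by
  set T := min tg ((1 / μ) * Real.log (K / Xe)) with hT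
  set Y := isoY μ k tg tk D Xe K Xinit with hYdef
  have hYrec : ∀ c, Y (c + 1) =
      D * Y c * Real.exp (μ *
          (if Xe ≤ Y c then min tg ((1 / μ) * Real.log (K / Y c)) else tg) *
          Ie Xe (Y c) - k * tk) := fun c => rfl
  have hY0 : Y 0 = Xinit := rfl
  have hYnn : ∀ c, 0 ≤ Y c := by
    intro c
    induction c with
    | zero => exact hXinit
    | succ c ih =>
      rw [hYrec]
      positivity
  -- basic per-step factors
  have hktk : 0 ≤ k * tk := mul_nonneg hk htk.le
  have hr2nn : 0 ≤ D * Real.exp (-(k * tk)) := by positivity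
  have hr2lt : D * Real.exp (-(k * tk)) < 1 := by
    calc D * Real.exp (-(k * tk)) ≤ D * 1 := by
          apply mul_le_mul_of_nonneg_left _ hD0.le
          exact Real.exp_le_one_iff.2 (neg_nonpos.2 hktk)
      _ = D := mul_one D
      _ < 1 := hD1
  have hK : (0:ℝ) < K := lt_trans hXe hXeK
  constructor
  · -- tendsto → condition, by contraposition
    intro htend
    by_contra hcon
    push_neg at hcon
    obtain ⟨h1, h2⟩ := hcon
    -- h1 : Xe ≤ Xinit, h2 : (k*tk - log D)/μ ≤ T
    have hμE : k * tk - Real.log D ≤ μ * T := by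
      have := (div_le_iff₀ hμ).mp h2
      linarith
    have hlow : ∀ c, Xe ≤ Y c := by
      intro c
      induction c with
      | zero => exact h1
      | succ c ih =>
        have hYpos : 0 < Y c := lt_of_lt_of_le hXe ih
        rw [hYrec, if_pos ih]
        have hIe : Ie Xe (Y c) = 1 := if_pos ih
        rw [hIe, mul_one]
        by_cases hcase : tg ≤ (1 / μ) * Real.log (K / Y c)
        · rw [min_eq_left hcase]
          have hTtg : T ≤ tg := min_le_left _ _
          have hexp : 0 ≤ μ * tg - k * tk + Real.log D := by
            have : μ * T ≤ μ * tg := mul_le_mul_of_nonneg_left hTtg hμ.le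
            linarith
          have h1le : 1 ≤ D * Real.exp (μ * tg - k * tk) := by
            have : D * Real.exp (μ * tg - k * tk) =
                Real.exp (μ * tg - k * tk + Real.log D) := by
              rw [Real.exp_add, Real.exp_log hD0]; ring
            rw [this]
            exact Real.one_le_exp hexp
          calc Xe ≤ Y c := ih
            _ = Y c * 1 := (mul_one _).symm
            _ ≤ Y c * (D * Real.exp (μ * tg - k * tk)) := by
                exact mul_le_mul_of_nonneg_left h1le hYpos.le
            _ = D * Y c * Real.exp (μ * tg - k * tk) := by ring
        · push_neg at hcase
          rw [min_eq_right hcase.le]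
          have hKx : Y c * Real.exp (μ * ((1 / μ) * Real.log (K / Y c))) = K := by
            have : μ * ((1 / μ) * Real.log (K / Y c)) = Real.log (K / Y c) := by
              rw [← mul_assoc, mul_one_div, div_self hμ.ne', one_mul]
            rw [this, Real.exp_log (div_pos hK hYpos)]
            rw [mul_comm, div_mul_cancel₀ _ hYpos.ne']
          have hTlog : μ * T ≤ Real.log (K / Xe) := by
            have : T ≤ (1 / μ) * Real.log (K / Xe) := min_le_right _ _
            have h' := mul_le_mul_of_nonneg_left this hμ.le
            calc μ * T ≤ μ * ((1 / μ) * Real.log (K / Xe)) := h'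
              _ = Real.log (K / Xe) := by
                rw [← mul_assoc, mul_one_div, div_self hμ.ne', one_mul]
          have hexp : Real.log (Xe / K) ≤ Real.log D - k * tk := by
            have hlogdiv : Real.log (Xe / K) = - Real.log (K / Xe) := by
              rw [← Real.log_inv]
              congr 1
              rw [inv_div]
            rw [hlogdiv]
            linarith
          calc Xe = K * (Xe / K) := by
                rw [mul_comm, div_mul_cancel₀ _ hK.ne']
            _ = K * Real.exp (Real.log (Xe / K)) := by
                rw [Real.exp_log (div_pos hXe hK)]
            _ ≤ K * Real.exp (Real.log D - k * tk) := by
                apply mul_le_mul_of_nonneg_left _ (by linarith : (0:ℝ) ≤ K)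
                exact Real.exp_le_exp.2 hexp
            _ = D * K * Real.exp (-(k * tk)) := by
                rw [show Real.log D - k * tk = Real.log D + (-(k*tk)) by ring,
                  Real.exp_add, Real.exp_log hD0]; ring
            _ = D * (Y c * Real.exp (μ * ((1 / μ) * Real.log (K / Y c)))) *
                Real.exp (-(k * tk)) := by rw [hKx]
            _ = D * Y c * Real.exp (μ * ((1 / μ) * Real.log (K / Y c)) - k * tk) := by
                rw [show μ * ((1 / μ) * Real.log (K / Y c)) - k * tk =
                  μ * ((1 / μ) * Real.log (K / Y c)) + (-(k * tk)) by ring,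
                  Real.exp_add]; ring
    have hev : ∀ᶠ c in Filter.atTop, Y c < Xe := htend.eventually (gt_mem_nhds hXe)
    obtain ⟨c, hc⟩ := hev.exists
    exact absurd (hlow c) (not_le.2 hc)
  · -- condition → tendsto
    intro h
    have key : ∃ ρ : ℝ, 0 ≤ ρ ∧ ρ < 1 ∧ ∀ c, Y (c + 1) ≤ ρ * Y c := by
      rcases h with h | h
      · -- Xinit < Xe : stays below Xe
        refine ⟨D * Real.exp (-(k * tk)), hr2nn, hr2lt, ?_⟩
        have hlt : ∀ c, Y c < Xe := by
          intro c
          induction c with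
          | zero => exact h
          | succ c ih =>
            rw [hYrec, if_neg (not_le.2 ih)]
            have hIe : Ie Xe (Y c) = 0 := if_neg (not_le.2 ih)
            rw [hIe, mul_zero, zero_sub]
            calc D * Y c * Real.exp (-(k * tk)) ≤ 1 * Y c * 1 := by
                  apply mul_le_mul
                  · apply mul_le_mul hD1.le le_rfl (hYnn c) zero_le_one
                  · exact Real.exp_le_one_iff.2 (neg_nonpos.2 hktk)
                  · positivity
                  · exact mul_nonneg zero_le_one (hYnn c)
              _ = Y c := by ring
              _ < Xe := ih
        intro c
        rw [hYrec, if_neg (not_le.2 (hlt c))]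
        have hIe : Ie Xe (Y c) = 0 := if_neg (not_le.2 (hlt c))
        rw [hIe, mul_zero, zero_sub]
        apply le_of_eq
        ring
      · -- T < E
        have hμE : μ * T - k * tk + Real.log D < 0 := by
          have := (lt_div_iff₀ hμ).mp h
          linarith
        set r1 := Real.exp (μ * T - k * tk + Real.log D) with hr1
        have hr1lt : r1 < 1 := Real.exp_lt_one_iff.2 hμE
        refine ⟨max r1 (D * Real.exp (-(k * tk))),
          le_trans (Real.exp_pos _).le (le_max_left _ _), max_lt hr1lt hr2lt, ?_⟩
        intro c
        rw [hYrec]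
        by_cases hc : Xe ≤ Y c
        · rw [if_pos hc]
          have hIe : Ie Xe (Y c) = 1 := if_pos hc
          rw [hIe, mul_one]
          have hYpos : 0 < Y c := lt_of_lt_of_le hXe hc
          have hsT : min tg ((1 / μ) * Real.log (K / Y c)) ≤ T := by
            apply le_min (min_le_left _ _)
            refine le_trans (min_le_right _ _) ?_
            apply mul_le_mul_of_nonneg_left _ (le_of_lt (one_div_pos.mpr hμ))
            apply Real.log_le_log (div_pos hK hYpos)
            exact div_le_div_of_nonneg_left hK.le hXe hc
          have hfac : D * Real.exp (μ * min tg ((1 / μ) * Real.log (K / Y c)) - k * tk)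
              ≤ r1 := by
            have : D * Real.exp (μ * min tg ((1 / μ) * Real.log (K / Y c)) - k * tk) =
                Real.exp (μ * min tg ((1 / μ) * Real.log (K / Y c)) - k * tk +
                  Real.log D) := by
              rw [Real.exp_add, Real.exp_log hD0]; ring
            rw [this, hr1]
            apply Real.exp_le_exp.2
            have := mul_le_mul_of_nonneg_left hsT hμ.le
            linarith
          calc D * Y c * Real.exp (μ * min tg ((1 / μ) * Real.log (K / Y c)) - k * tk)
              = (D * Real.exp (μ * min tg ((1 / μ) * Real.log (K / Y c)) - k * tk)) *
                Y c := by ring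
            _ ≤ r1 * Y c := mul_le_mul_of_nonneg_right hfac (hYnn c)
            _ ≤ max r1 (D * Real.exp (-(k * tk))) * Y c :=
                mul_le_mul_of_nonneg_right (le_max_left _ _) (hYnn c)
        · rw [if_neg hc]
          have hIe : Ie Xe (Y c) = 0 := if_neg hc
          rw [hIe, mul_zero, zero_sub]
          calc D * Y c * Real.exp (-(k * tk))
              = (D * Real.exp (-(k * tk))) * Y c := by ring
            _ ≤ max r1 (D * Real.exp (-(k * tk))) * Y c :=
                mul_le_mul_of_nonneg_right (le_max_right _ _) (hYnn c)
    obtain ⟨ρ, hρ0, hρ1, hstep⟩ := key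
    have hbound : ∀ c, Y c ≤ Xinit * ρ ^ c := by
      intro c
      induction c with
      | zero => simp [hY0]
      | succ c ih =>
        calc Y (c + 1) ≤ ρ * Y c := hstep c
          _ ≤ ρ * (Xinit * ρ ^ c) := mul_le_mul_of_nonneg_left ih hρ0
          _ = Xinit * ρ ^ (c + 1) := by ring
    have hgeom : Filter.Tendsto (fun c => Xinit * ρ ^ c) Filter.atTop (nhds 0) := by
      have := tendsto_pow_atTop_nhds_zero_of_lt_one hρ0 hρ1
      have h' := this.const_mul Xinit
      simpa using h'
    exact squeeze_zero hYnn hbound hgeom
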